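/- Let p ≥ 1 be an integer and let F : ℝ^p → ℂ be C^∞ on ℝ^p∖{0} and homogeneous of degree 2. Let χ ∈ C_c^∞(ℝ^p) satisfy 0 ≤ χ ≤ 1, χ(y) = 1 for |y| ≤ 1, χ(y) = 0 for |y| ≥ 3, and |∂_j χ(y)| ≤ 1 and |∂_j∂_k χ(y)| ≤ 1 for all y and all 1 ≤ j,k ≤ p. For an integer ℓ ≥ 1 define F_ℓ(y) := (1 − χ(ℓy)) F(y), and set C_F := sup_{|z|≤3} |F(z)| + max_{1≤j≤p} sup_{|z|≤3} |∂_j F(z)| + max_{1≤j,k≤p} sup_{|z|=1} |∂_j∂_k F(z)|. Then F_ℓ ∈ C^∞(ℝ^p) and for all y ∈ ℝ^p, all ℓ ≥ 1 and all 1 ≤ j,k ≤ p: |F_ℓ(y)| ≤ C_F |y|², |∂_j F_ℓ(y)| ≤ 4 C_F |y|, and |∂_j∂_k F_ℓ(y)| ≤ 4 C_F. -/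

import Mathlib

open MeasureTheory Filter Set
open scoped ENNReal FourierTransform

noncomputable section

/-- `ℝ^n`. -/
abbrev Rn (n : ℕ) := EuclideanSpace ℝ (Fin n)

variable {n : ℕ}

/-- Partial derivative `∂_i` of a complex-valued function on `ℝ^n`. -/
def pd (i : Fin n) (f : Rn n → ℂ) : Rn n → ℂ :=
  fun x => fderiv ℝ f x (EuclideanSpace.single i 1)

/-- Partial derivative `∂_i` of a real-valued function on `ℝ^n`. -/
def pdR (i : Fin n) (f : Rn n → ℝ) : Rn n → ℝ :=
  fun x => fderiv ℝ f x (EuclideanSpace.single i 1)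

/-- Laplacian of a complex-valued function. -/
def lap (f : Rn n → ℂ) : Rn n → ℂ := fun x => ∑ i, pd i (pd i f) x

/-- Laplacian of a real-valued function. -/
def lapR (f : Rn n → ℝ) : Rn n → ℝ := fun x => ∑ i, pdR i (pdR i f) x

/-- Sobolev `H^k` norm (for smooth functions): `(Σ_{j≤k} ‖D^j f‖_{L²}²)^{1/2}`. -/
def HkNorm (k : ℕ) (f : Rn n → ℂ) : ℝ≥0∞ :=
  (∑ j ∈ Finset.range (k+1),
    (eLpNorm (fun x => ‖iteratedFDeriv ℝ j f x‖) 2 volume)^2) ^ (1/2 : ℝ)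

/-- Sobolev `H^k` norm of a real-valued function. -/
def HkNormR (k : ℕ) (f : Rn n → ℝ) : ℝ≥0∞ :=
  (∑ j ∈ Finset.range (k+1),
    (eLpNorm (fun x => ‖iteratedFDeriv ℝ j f x‖) 2 volume)^2) ^ (1/2 : ℝ)

/-- Membership in `H^k(ℝ^n)` (smooth model). -/
def InHk (k : ℕ) (f : Rn n → ℂ) : Prop := ContDiff ℝ k f ∧ HkNorm k f < ⊤

/-- Membership in `H^∞(ℝ^n) = ∩_k H^k(ℝ^n)`. -/
def InHinf (f : Rn n → ℂ) : Prop := ∀ k, InHk k f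

def InHkR (k : ℕ) (f : Rn n → ℝ) : Prop := ContDiff ℝ k f ∧ HkNormR k f < ⊤

def InHinfR (f : Rn n → ℝ) : Prop := ∀ k, InHkR k f

/-- `u ∈ C(S; H^∞(ℝ^n))` for a time set `S ⊆ ℝ`. -/
def ContHinfOn (S : Set ℝ) (u : ℝ → Rn n → ℂ) : Prop :=
  (∀ t ∈ S, InHinf (u t)) ∧
  ∀ k : ℕ, ∀ t ∈ S,
    Tendsto (fun s => HkNorm k (fun x => u s x - u t x)) (nhdsWithin t S) (nhds 0)

def ContHinfOnR (S : Set ℝ) (φ : ℝ → Rn n → ℝ) : Prop :=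
  (∀ t ∈ S, InHinfR (φ t)) ∧
  ∀ k : ℕ, ∀ t ∈ S,
    Tendsto (fun s => HkNormR k (fun x => φ s x - φ t x)) (nhdsWithin t S) (nhds 0)

/-- The Cauchy problem (NLS_ε): `iε ∂_t u + (ε²/2) Δu = |u|^{2σ} u` on the time set `S`,
with initial datum `u0`. -/
def IsNLS (σ n : ℕ) (ε : ℝ) (u0 : Rn n → ℂ) (S : Set ℝ) (u : ℝ → Rn n → ℂ) : Prop :=
  (∀ x, u 0 x = u0 x) ∧
  ∀ t ∈ S, ∀ x,
    Complex.I * ε * derivWithin (fun s => u s x) S t + (ε^2/2) * lap (u t) x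
      = ((‖u t x‖ : ℝ) : ℂ)^(2*σ) * u t x

/-- The WKB initial datum `a_0^ε e^{iφ_0/ε}`. -/
def WKBdatum (n : ℕ) (a0e : ℝ → Rn n → ℂ) (φ0 : Rn n → ℝ) (ε : ℝ) : Rn n → ℂ :=
  fun x => a0e ε x * Complex.exp (Complex.I * (φ0 x) / ε)

/-- The limit system (E):
`∂_t φ + |∇φ|²/2 + |a|^{2σ} = 0`, `∂_t a + ∇φ·∇a + aΔφ/2 = 0` on the time set `S`. -/
def IsLimit (σ n : ℕ) (φ0 : Rn n → ℝ) (a0 : Rn n → ℂ) (S : Set ℝ)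
    (φ : ℝ → Rn n → ℝ) (a : ℝ → Rn n → ℂ) : Prop :=
  (∀ x, φ 0 x = φ0 x) ∧ (∀ x, a 0 x = a0 x) ∧
  ∀ t ∈ S, ∀ x,
    (derivWithin (fun s => φ s x) S t + (1/2) * ∑ i, (pdR i (φ t) x)^2
       + ‖a t x‖^(2*σ) = 0) ∧
    (derivWithin (fun s => a s x) S t + (∑ i, (pdR i (φ t) x : ℂ) * pd i (a t) x)
       + (1/2) * a t x * (lapR (φ t) x : ℂ) = 0)

/-- Assumption (A). -/
def AssumpA (n : ℕ) (a0e : ℝ → Rn n → ℂ) (a0 : Rn n → ℂ) (φ0 : Rn n → ℝ) : Prop :=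
  InHinf a0 ∧ InHinfR φ0 ∧ (∀ ε ∈ Ioc (0:ℝ) 1, InHinf (a0e ε)) ∧
  ∀ k : ℕ, ∃ C : ℝ, ∀ ε ∈ Ioc (0:ℝ) 1,
    HkNorm k (fun x => a0e ε x - a0 x) ≤ ENNReal.ofReal (C * ε)

/-- Assumption (A'): Assumption (A) together with a first order expansion
`a_0^ε = a_0 + ε a_1 + O(ε²)`. -/
def AssumpA' (n : ℕ) (a0e : ℝ → Rn n → ℂ) (a0 : Rn n → ℂ) (φ0 : Rn n → ℝ)
    (a1 : Rn n → ℂ) : Prop :=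
  AssumpA n a0e a0 φ0 ∧ InHinf a1 ∧
  ∀ k : ℕ, ∃ C : ℝ, ∀ ε ∈ Ioc (0:ℝ) 1,
    HkNorm k (fun x => a0e ε x - a0 x - (ε:ℂ) * a1 x) ≤ ENNReal.ofReal (C * ε^2)

/-- The admissible Sobolev indices `k` in the main theorem. -/
def goodIndex (σ n k : ℕ) : Prop :=
  σ = 1 ∨ (σ = 2 ∧ n = 1 ∧ k = 2) ∨ (σ = 2 ∧ 2 ≤ n ∧ k = 1) ∨ (3 ≤ σ ∧ k = σ)

/-- `Q_σ(r₁,r₂) = 2σ ∫₀¹ (1-s)(r₂+s(r₁-r₂))^{σ-1} ds`. -/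
def Qs (σ : ℕ) (r1 r2 : ℝ) : ℝ :=
  2 * σ * ∫ s in (0:ℝ)..1, (1 - s) * (r2 + s * (r1 - r2))^(σ - 1)

/-- `B_σ(r₁,r₂) = (r₁-r₂)√(Q_σ(r₁,r₂))`. -/
def Bs (σ : ℕ) (r1 r2 : ℝ) : ℝ := (r1 - r2) * Real.sqrt (Qs σ r1 r2)

/-- `P_σ(r₁,r₂) = Σ_{ℓ<σ} r₁^{σ-1-ℓ} r₂^ℓ`. -/
def Ps (σ : ℕ) (r1 r2 : ℝ) : ℝ := ∑ l ∈ Finset.range σ, r1^(σ - 1 - l) * r2^l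

/-- `G_σ(r₁,r₂) = P_σ(r₁,r₂)/√(Q_σ(r₁,r₂))` (with the convention `G_σ(0,0) = 0` for `σ ≥ 2`,
which holds automatically since `0/0 = 0` and `P_σ(0,0) = 0`). -/
def Gs (σ : ℕ) (r1 r2 : ℝ) : ℝ := Ps σ r1 r2 / Real.sqrt (Qs σ r1 r2)

end

noncomputable section

/-- Partial derivative `∂_j` of a complex-valued function on `ℝ^p`. -/
def pdE {p : ℕ} (j : Fin p) (G : EuclideanSpace ℝ (Fin p) → ℂ) :
    EuclideanSpace ℝ (Fin p) → ℂ :=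
  fun y => fderiv ℝ G y (EuclideanSpace.single j 1)

/-- Partial derivative `∂_j` of a real-valued function on `ℝ^p`. -/
def pdER {p : ℕ} (j : Fin p) (G : EuclideanSpace ℝ (Fin p) → ℝ) :
    EuclideanSpace ℝ (Fin p) → ℝ :=
  fun y => fderiv ℝ G y (EuclideanSpace.single j 1)

end

section
variable {p : ℕ}

lemma hasFDerivAt_smul_self (c : ℝ) (y : EuclideanSpace ℝ (Fin p)) :
    HasFDerivAt (fun z : EuclideanSpace ℝ (Fin p) => c • z)
      (c • ContinuousLinearMap.id ℝ (EuclideanSpace ℝ (Fin p))) y := by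
  exact (hasFDerivAt_id y).const_smul c

lemma fderiv_scale {W : Type*} [NormedAddCommGroup W] [NormedSpace ℝ W]
    (G : EuclideanSpace ℝ (Fin p) → W) (c : ℝ) (y : EuclideanSpace ℝ (Fin p))
    (hG : DifferentiableAt ℝ G (c • y)) (v : EuclideanSpace ℝ (Fin p)) :
    fderiv ℝ (fun z => G (c • z)) y v = c • fderiv ℝ G (c • y) v := by
  have h := (hG.hasFDerivAt.comp y (hasFDerivAt_smul_self c y)).fderiv
  have h2 : fderiv ℝ (fun z => G (c • z)) y
      = (fderiv ℝ G (c • y)).comp (c • ContinuousLinearMap.id ℝ (EuclideanSpace ℝ (Fin p))) := h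
  rw [h2]; simp [ContinuousLinearMap.smul_apply, _root_.map_smul]

variable (F : EuclideanSpace ℝ (Fin p) → ℂ)
  (hFsmooth : ContDiffOn ℝ (⊤ : ℕ∞) F {y | y ≠ 0})
  (hFhom : ∀ l : ℝ, 0 ≤ l → ∀ y, F (l • y) = (l : ℂ)^2 * F y)

lemma hopen : IsOpen {y : EuclideanSpace ℝ (Fin p) | y ≠ 0} := isOpen_ne

include hFsmooth in
lemma hFdiff : ∀ y : EuclideanSpace ℝ (Fin p), y ≠ 0 → DifferentiableAt ℝ F y := fun y hy =>
  ((hFsmooth.contDiffAt (hopen.mem_nhds hy)).differentiableAt (by simp))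

include hFhom in
lemma hF0 : F 0 = 0 := by
  have := hFhom 0 le_rfl 0
  simpa using this

include hFsmooth hFhom in
lemma pdE_hom (j : Fin p) (t : ℝ) (ht : 0 < t) (y : EuclideanSpace ℝ (Fin p)) (hy : y ≠ 0) :
    pdE j F (t • y) = (t : ℂ) * pdE j F y := by
  have hty : t • y ≠ 0 := smul_ne_zero (ne_of_gt ht) hy
  have hd : DifferentiableAt ℝ F (t • y) := hFdiff F hFsmooth _ hty
  have hd2 : DifferentiableAt ℝ F y := hFdiff F hFsmooth _ hy
  have heq : (fun z => F (t • z)) = fun z => (t : ℂ)^2 * F z := funext fun z => hFhom t ht.le z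
  have h1 := fderiv_scale F t y hd (EuclideanSpace.single j 1)
  rw [heq] at h1
  rw [fderiv_const_mul hd2] at h1
  simp only [ContinuousLinearMap.smul_apply] at h1
  -- h1 : (t:ℂ)^2 * fderiv F y v = t • fderiv F (t•y) v
  have ht' : (t : ℂ) ≠ 0 := by exact_mod_cast ne_of_gt ht
  simp only [Complex.real_smul, smul_eq_mul] at h1
  rw [pdE, pdE]
  have h3 : (t:ℂ) * (fderiv ℝ F (t • y) (EuclideanSpace.single j 1))
      = (t:ℂ) * ((t:ℂ) * fderiv ℝ F y (EuclideanSpace.single j 1)) := by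
    rw [← h1]; ring
  exact mul_left_cancel₀ ht' h3
end

section
variable {p : ℕ}
variable (F : EuclideanSpace ℝ (Fin p) → ℂ)
  (hFsmooth : ContDiffOn ℝ (⊤ : ℕ∞) F {y | y ≠ 0})
  (hFhom : ∀ l : ℝ, 0 ≤ l → ∀ y, F (l • y) = (l : ℂ)^2 * F y)

include hFsmooth in
lemma pdE_smoothOn (j : Fin p) :
    ContDiffOn ℝ (⊤ : ℕ∞) (pdE j F) {y : EuclideanSpace ℝ (Fin p) | y ≠ 0} := by
  have h := hFsmooth.fderiv_of_isOpen (m := (⊤ : ℕ∞)) hopen (by simp)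
  exact h.clm_apply contDiffOn_const

include hFsmooth in
lemma pdE_diff (j : Fin p) :
    ∀ y : EuclideanSpace ℝ (Fin p), y ≠ 0 → DifferentiableAt ℝ (pdE j F) y := fun y hy =>
  (((pdE_smoothOn F hFsmooth j).contDiffAt (hopen.mem_nhds hy)).differentiableAt (by simp))

include hFsmooth hFhom in
lemma pdE2_hom (j k : Fin p) (t : ℝ) (ht : 0 < t)
    (y : EuclideanSpace ℝ (Fin p)) (hy : y ≠ 0) :
    pdE j (pdE k F) (t • y) = pdE j (pdE k F) y := by
  have hty : t • y ≠ 0 := smul_ne_zero (ne_of_gt ht) hy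
  have hd : DifferentiableAt ℝ (pdE k F) (t • y) := pdE_diff F hFsmooth k _ hty
  have hd2 : DifferentiableAt ℝ (pdE k F) y := pdE_diff F hFsmooth k y hy
  have heq : (fun z => pdE k F (t • z)) =ᶠ[nhds y] fun z => (t : ℂ) * pdE k F z := by
    filter_upwards [hopen.mem_nhds hy] with z hz
    exact pdE_hom F hFsmooth hFhom k t ht z hz
  have h1 := fderiv_scale (pdE k F) t y hd (EuclideanSpace.single j 1)
  rw [heq.fderiv_eq] at h1
  rw [fderiv_const_mul hd2] at h1
  simp only [ContinuousLinearMap.smul_apply, Complex.real_smul, smul_eq_mul] at h1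
  have ht' : (t : ℂ) ≠ 0 := by exact_mod_cast ne_of_gt ht
  rw [pdE, pdE]
  exact mul_left_cancel₀ ht' (by rw [← h1])
end

section
variable {p : ℕ}
variable (F : EuclideanSpace ℝ (Fin p) → ℂ)
  (hFsmooth : ContDiffOn ℝ (⊤ : ℕ∞) F {y | y ≠ 0})
  (hFhom : ∀ l : ℝ, 0 ≤ l → ∀ y, F (l • y) = (l : ℂ)^2 * F y)
  (CF : ℝ)
  (hCF1 : ∀ z, ‖z‖ ≤ 3 → ‖F z‖ ≤ CF)
  (hCF2 : ∀ j z, ‖z‖ ≤ 3 → ‖pdE j F z‖ ≤ CF)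
  (hCF3 : ∀ j k z, ‖z‖ = 1 → ‖pdE j (pdE k F) z‖ ≤ CF)

-- unit vector decomposition
lemma unit_decomp (y : EuclideanSpace ℝ (Fin p)) (hy : y ≠ 0) :
    ‖(‖y‖⁻¹ • y : EuclideanSpace ℝ (Fin p))‖ = 1 ∧ y = ‖y‖ • (‖y‖⁻¹ • y) := by
  have h0 : ‖y‖ ≠ 0 := norm_ne_zero_iff.mpr hy
  constructor
  · rw [norm_smul, norm_inv, norm_norm, inv_mul_cancel₀ h0]
  · rw [smul_smul, mul_inv_cancel₀ h0, one_smul]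

include hFhom hCF1 in
lemma bound_F : ∀ y, ‖F y‖ ≤ CF * ‖y‖^2 := by
  intro y
  by_cases hy : y = 0
  · subst hy; rw [hF0 F hFhom]; simp
  · obtain ⟨hu, hdec⟩ := unit_decomp y hy
    have hF : F y = (‖y‖ : ℂ)^2 * F (‖y‖⁻¹ • y) := by
      conv_lhs => rw [hdec]
      rw [hFhom _ (norm_nonneg y)]
    rw [hF, norm_mul]
    have : ‖(‖y‖ : ℂ)^2‖ = ‖y‖^2 := by
      rw [norm_pow, Complex.norm_real, Real.norm_eq_abs, abs_of_nonneg (norm_nonneg y)]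
    rw [this, mul_comm]
    exact mul_le_mul_of_nonneg_right (hCF1 _ (by rw [hu]; norm_num)) (by positivity)

include hFsmooth hFhom hCF2 in
lemma bound_pdE : ∀ (j : Fin p) y, y ≠ 0 → ‖pdE j F y‖ ≤ CF * ‖y‖ := by
  intro j y hy
  obtain ⟨hu, hdec⟩ := unit_decomp y hy
  have hn : (0:ℝ) < ‖y‖ := norm_pos_iff.mpr hy
  have hu0 : (‖y‖⁻¹ • y : EuclideanSpace ℝ (Fin p)) ≠ 0 := by
    intro h; rw [h] at hu; simp at hu
  have hF : pdE j F y = (‖y‖ : ℂ) * pdE j F (‖y‖⁻¹ • y) := by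
    conv_lhs => rw [hdec]
    rw [pdE_hom F hFsmooth hFhom j _ hn _ hu0]
  rw [hF, norm_mul, Complex.norm_real, Real.norm_eq_abs, abs_of_nonneg (norm_nonneg y), mul_comm]
  exact mul_le_mul_of_nonneg_right (hCF2 _ _ (by rw [hu]; norm_num)) hn.le

include hFsmooth hFhom hCF3 in
lemma bound_pdE2 : ∀ (j k : Fin p) y, y ≠ 0 → ‖pdE j (pdE k F) y‖ ≤ CF := by
  intro j k y hy
  obtain ⟨hu, hdec⟩ := unit_decomp y hy
  have hn : (0:ℝ) < ‖y‖ := norm_pos_iff.mpr hy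
  have hu0 : (‖y‖⁻¹ • y : EuclideanSpace ℝ (Fin p)) ≠ 0 := by
    intro h; rw [h] at hu; simp at hu
  have hF : pdE j (pdE k F) y = pdE j (pdE k F) (‖y‖⁻¹ • y) := by
    conv_lhs => rw [hdec]
    rw [pdE2_hom F hFsmooth hFhom j k _ hn _ hu0]
  rw [hF]
  exact hCF3 _ _ _ hu

-- scaled bounds
include hFhom hCF1 in
lemma bound_F_scaled (t : ℝ) (ht : 0 ≤ t) (y : EuclideanSpace ℝ (Fin p))
    (h3 : t * ‖y‖ ≤ 3) : t^2 * ‖F y‖ ≤ CF := by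
  have := hCF1 (t • y) (by rw [norm_smul, Real.norm_eq_abs, abs_of_nonneg ht]; exact h3)
  rw [hFhom t ht y, norm_mul, norm_pow, Complex.norm_real, Real.norm_eq_abs, abs_of_nonneg ht] at this
  exact this

include hFsmooth hFhom hCF2 in
lemma bound_pdE_scaled (j : Fin p) (t : ℝ) (ht : 0 < t) (y : EuclideanSpace ℝ (Fin p))
    (hy : y ≠ 0) (h3 : t * ‖y‖ ≤ 3) : t * ‖pdE j F y‖ ≤ CF := by
  have := hCF2 j (t • y) (by rw [norm_smul, Real.norm_eq_abs, abs_of_pos ht]; exact h3)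
  rw [pdE_hom F hFsmooth hFhom j t ht y hy, norm_mul, Complex.norm_real, Real.norm_eq_abs, abs_of_pos ht] at this
  exact this

end

section
variable {p : ℕ}
variable (χ : EuclideanSpace ℝ (Fin p) → ℝ)
  (hχ01 : ∀ y, 0 ≤ χ y ∧ χ y ≤ 1)
  (hχone : ∀ y, ‖y‖ ≤ 1 → χ y = 1)
  (hχzero : ∀ y, 3 ≤ ‖y‖ → χ y = 0)

include hχ01 hχone in
lemma chi_fderiv_inner (z : EuclideanSpace ℝ (Fin p)) (hz : ‖z‖ ≤ 1) :
    fderiv ℝ χ z = 0 := by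
  have : IsLocalMax χ z :=
    Filter.Eventually.of_forall fun b => (hχ01 b).2.trans_eq (hχone z hz).symm
  exact this.fderiv_eq_zero

include hχ01 hχzero in
lemma chi_fderiv_outer (z : EuclideanSpace ℝ (Fin p)) (hz : 3 ≤ ‖z‖) :
    fderiv ℝ χ z = 0 := by
  have : IsLocalMin χ z :=
    Filter.Eventually.of_forall fun b => (hχzero z hz) ▸ (hχ01 b).1
  exact this.fderiv_eq_zero

include hχ01 hχone in
lemma chi_fderiv2_inner (k : Fin p) (z : EuclideanSpace ℝ (Fin p)) (hz : ‖z‖ < 1) :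
    fderiv ℝ (pdER k χ) z = 0 := by
  have hev : (fun _ : EuclideanSpace ℝ (Fin p) => (0:ℝ)) =ᶠ[nhds z] pdER k χ := by
    filter_upwards [Metric.ball_mem_nhds z (by linarith : (0:ℝ) < 1 - ‖z‖)] with w hw
    have hwn : ‖w‖ ≤ 1 := by
      have := norm_le_norm_add_norm_sub' w z
      have h2 : dist w z < 1 - ‖z‖ := hw
      rw [dist_eq_norm] at h2
      linarith [norm_le_insert' w z]
    rw [pdER, chi_fderiv_inner χ hχ01 hχone w hwn]; simp
  rw [← hev.fderiv_eq]; exact fderiv_const_apply 0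

include hχ01 hχzero in
lemma chi_fderiv2_outer (k : Fin p) (z : EuclideanSpace ℝ (Fin p)) (hz : 3 < ‖z‖) :
    fderiv ℝ (pdER k χ) z = 0 := by
  have hev : (fun _ : EuclideanSpace ℝ (Fin p) => (0:ℝ)) =ᶠ[nhds z] pdER k χ := by
    filter_upwards [Metric.ball_mem_nhds z (by linarith : (0:ℝ) < ‖z‖ - 3)] with w hw
    have hwn : 3 ≤ ‖w‖ := by
      have h2 : dist w z < ‖z‖ - 3 := hw
      rw [dist_eq_norm] at h2
      have := norm_sub_norm_le w z
      have h3 := abs_norm_sub_norm_le w z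
      have := abs_le.mp h3
      linarith [this.1]
    rw [pdER, chi_fderiv_outer χ hχ01 hχzero w hwn]; simp
  rw [← hev.fderiv_eq]; exact fderiv_const_apply 0

end

section
variable {p : ℕ}

lemma pdER_contDiff (χ : EuclideanSpace ℝ (Fin p) → ℝ) (hχ : ContDiff ℝ (⊤ : ℕ∞) χ) (k : Fin p) :
    ContDiff ℝ (⊤ : ℕ∞) (pdER k χ) :=
  (hχ.fderiv_right (m := (⊤ : ℕ∞)) (by simp)).clm_apply contDiff_const

lemma hasFDerivAt_ofReal_mul {u : EuclideanSpace ℝ (Fin p) → ℝ}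
    {f : EuclideanSpace ℝ (Fin p) → ℂ} {y : EuclideanSpace ℝ (Fin p)}
    {u' : EuclideanSpace ℝ (Fin p) →L[ℝ] ℝ} {f' : EuclideanSpace ℝ (Fin p) →L[ℝ] ℂ}
    (hu : HasFDerivAt u u' y) (hf : HasFDerivAt f f' y) :
    HasFDerivAt (fun z => (u z : ℂ) * f z)
      ((u y : ℂ) • f' + f y • (Complex.ofRealCLM.comp u')) y :=
  (Complex.ofRealCLM.hasFDerivAt.comp y hu).mul hf

-- chain rule for χ(c•z) in real form, as pdER values
lemma pdER_scale (u : EuclideanSpace ℝ (Fin p) → ℝ) (hu : Differentiable ℝ u)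
    (c : ℝ) (y : EuclideanSpace ℝ (Fin p)) (k : Fin p) :
    pdER k (fun z => u (c • z)) y = c * pdER k u (c • y) := by
  rw [pdER, pdER, fderiv_scale u c y (hu _) (EuclideanSpace.single k 1)]
  simp

end

section
variable {p : ℕ}
variable (F : EuclideanSpace ℝ (Fin p) → ℂ)
  (hFsmooth : ContDiffOn ℝ (⊤ : ℕ∞) F {y | y ≠ 0})
  (χ : EuclideanSpace ℝ (Fin p) → ℝ)
  (hχsmooth : ContDiff ℝ (⊤ : ℕ∞) χ)
  (hχ01 : ∀ y, 0 ≤ χ y ∧ χ y ≤ 1)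
  (hχone : ∀ y, ‖y‖ ≤ 1 → χ y = 1)
  (c : ℝ) (hc : 1 ≤ c)

include hFsmooth hχsmooth hχ01 hχone hc in
lemma D1_formula (k : Fin p) (y : EuclideanSpace ℝ (Fin p)) :
    pdE k (fun z => (1 - χ (c • z) : ℂ) * F z) y
      = -((c : ℂ) * (pdER k χ (c • y) : ℂ)) * F y
        + (1 - (χ (c • y) : ℂ)) * pdE k F y := by
  have hc0 : (0:ℝ) < c := lt_of_lt_of_le one_pos hc
  by_cases hy : y = 0
  · subst hy
    have hev : (fun _ : EuclideanSpace ℝ (Fin p) => (0:ℂ))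
        =ᶠ[nhds (0 : EuclideanSpace ℝ (Fin p))] (fun z => (1 - χ (c • z) : ℂ) * F z) := by
      filter_upwards [Metric.ball_mem_nhds (0 : EuclideanSpace ℝ (Fin p))
        (by positivity : (0:ℝ) < 1/c)] with z hz
      rw [mem_ball_zero_iff] at hz
      have hcz : ‖c • z‖ ≤ 1 := by
        rw [norm_smul, Real.norm_eq_abs, abs_of_pos hc0]
        calc c * ‖z‖ ≤ c * (1/c) := by nlinarith
        _ = 1 := by field_simp
      rw [hχone _ hcz]
      push_cast; ring
    have hL : pdE k (fun z => (1 - χ (c • z) : ℂ) * F z) 0 = 0 := by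
      rw [pdE, ← hev.fderiv_eq]; simp
    rw [hL]
    have h0 : pdER k χ (c • (0 : EuclideanSpace ℝ (Fin p))) = 0 := by
      rw [smul_zero, pdER, chi_fderiv_inner χ hχ01 hχone 0 (by simp)]; simp
    rw [h0, smul_zero, hχone 0 (by simp)]
    push_cast; ring
  · have hχd : Differentiable ℝ χ := hχsmooth.differentiable (by simp)
    have h1 : HasFDerivAt (fun z : EuclideanSpace ℝ (Fin p) => χ (c • z))
        ((fderiv ℝ χ (c • y)).comp (c • ContinuousLinearMap.id ℝ _)) y :=
      ((hχd _).hasFDerivAt).comp y (hasFDerivAt_smul_self c y)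
    have h2 : HasFDerivAt (fun z : EuclideanSpace ℝ (Fin p) => ((1:ℂ) - (χ (c • z) : ℂ)))
        (-(Complex.ofRealCLM.comp ((fderiv ℝ χ (c • y)).comp
            (c • ContinuousLinearMap.id ℝ _)))) y :=
      (Complex.ofRealCLM.hasFDerivAt.comp y h1).const_sub 1
    have hFy : HasFDerivAt F (fderiv ℝ F y) y :=
      (hFdiff F hFsmooth y hy).hasFDerivAt
    have h3 := h2.mul hFy
    rw [pdE, (show HasFDerivAt (fun z => ((1:ℂ) - (χ (c • z) : ℂ)) * F z) _ y from h3).fderiv]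
    simp only [ContinuousLinearMap.add_apply, ContinuousLinearMap.smul_apply,
      ContinuousLinearMap.neg_apply, ContinuousLinearMap.comp_apply,
      ContinuousLinearMap.id_apply, Complex.ofRealCLM_apply, _root_.map_smul,
      smul_eq_mul, Complex.real_smul, pdE, pdER]
    push_cast; ring
end

section
variable {p : ℕ}
variable (F : EuclideanSpace ℝ (Fin p) → ℂ)
  (hFsmooth : ContDiffOn ℝ (⊤ : ℕ∞) F {y | y ≠ 0})
  (χ : EuclideanSpace ℝ (Fin p) → ℝ)
  (hχsmooth : ContDiff ℝ (⊤ : ℕ∞) χ)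
  (hχ01 : ∀ y, 0 ≤ χ y ∧ χ y ≤ 1)
  (hχone : ∀ y, ‖y‖ ≤ 1 → χ y = 1)
  (c : ℝ) (hc : 1 ≤ c)

lemma contDiff_smul_self' (c' : ℝ) :
    ContDiff ℝ (⊤ : ℕ∞) (fun z : EuclideanSpace ℝ (Fin p) => c' • z) :=
  contDiff_id.const_smul c'

include hFsmooth hχsmooth hχ01 hχone hc in
lemma D2_formula (j k : Fin p) (y : EuclideanSpace ℝ (Fin p)) (hy : y ≠ 0) :
    pdE j (pdE k (fun z => (1 - χ (c • z) : ℂ) * F z)) y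
      = -((c : ℂ)^2 * (pdER j (pdER k χ) (c • y) : ℂ)) * F y
        - ((c : ℂ) * (pdER k χ (c • y) : ℂ)) * pdE j F y
        - ((c : ℂ) * (pdER j χ (c • y) : ℂ)) * pdE k F y
        + (1 - (χ (c • y) : ℂ)) * pdE j (pdE k F) y := by
  have hc0 : (0:ℝ) < c := lt_of_lt_of_le one_pos hc
  set w : EuclideanSpace ℝ (Fin p) → ℝ := fun z => -(c * pdER k χ (c • z)) with hw_def
  set r : EuclideanSpace ℝ (Fin p) → ℝ := fun z => 1 - χ (c • z) with hr_def
  have hfun : pdE k (fun z => (1 - χ (c • z) : ℂ) * F z)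
      = fun z => (w z : ℂ) * F z + (r z : ℂ) * pdE k F z := by
    funext z
    rw [D1_formula F hFsmooth χ hχsmooth hχ01 hχone c hc k z]
    simp only [hw_def, hr_def]
    push_cast; ring
  -- differentiability facts
  have hucd : ContDiff ℝ (⊤ : ℕ∞) (fun z : EuclideanSpace ℝ (Fin p) => pdER k χ (c • z)) :=
    (pdER_contDiff χ hχsmooth k).comp (contDiff_smul_self' c)
  have hwcd : ContDiff ℝ (⊤ : ℕ∞) w := (contDiff_const.mul hucd).neg
  have hrcd : ContDiff ℝ (⊤ : ℕ∞) r := contDiff_const.sub (hχsmooth.comp (contDiff_smul_self' c))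
  have hFy : HasFDerivAt F (fderiv ℝ F y) y := (hFdiff F hFsmooth y hy).hasFDerivAt
  have hpFy : HasFDerivAt (pdE k F) (fderiv ℝ (pdE k F) y) y :=
    (pdE_diff F hFsmooth k y hy).hasFDerivAt
  have h1 := hasFDerivAt_ofReal_mul ((hwcd.differentiable (by simp) y).hasFDerivAt) hFy
  have h2 := hasFDerivAt_ofReal_mul ((hrcd.differentiable (by simp) y).hasFDerivAt) hpFy
  have h3 := h1.add h2
  rw [pdE, hfun, (show HasFDerivAt (fun z => (w z : ℂ) * F z + (r z : ℂ) * pdE k F z) _ y from h3).fderiv]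
  -- compute the real partial derivatives of w and r
  have hwv : fderiv ℝ w y (EuclideanSpace.single j 1)
      = -(c * (c * pdER j (pdER k χ) (c • y))) := by
    have hweq : w = fun z => (-c) * pdER k χ (c • z) := by funext z; simp [hw_def]
    rw [hweq, fderiv_const_mul (hucd.differentiable (by simp) y)]
    simp only [ContinuousLinearMap.smul_apply, smul_eq_mul]
    have := pdER_scale (pdER k χ) ((pdER_contDiff χ hχsmooth k).differentiable (by simp)) c y j
    rw [pdER] at this
    rw [this]; ring
  have hrv : fderiv ℝ r y (EuclideanSpace.single j 1) = -(c * pdER j χ (c • y)) := by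
    rw [hr_def]
    rw [fderiv_const_sub]
    simp only [ContinuousLinearMap.neg_apply]
    have := pdER_scale χ (hχsmooth.differentiable (by simp)) c y j
    rw [pdER] at this
    rw [this]
  simp only [ContinuousLinearMap.add_apply, ContinuousLinearMap.smul_apply,
    ContinuousLinearMap.comp_apply, Complex.ofRealCLM_apply, smul_eq_mul,
    Complex.real_smul, hwv, hrv]
  simp only [hw_def, hr_def, pdE]
  push_cast; ring
end

section
variable {p : ℕ}
variable (F : EuclideanSpace ℝ (Fin p) → ℂ)
  (hFsmooth : ContDiffOn ℝ (⊤ : ℕ∞) F {y | y ≠ 0})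
  (χ : EuclideanSpace ℝ (Fin p) → ℝ)
  (hχsmooth : ContDiff ℝ (⊤ : ℕ∞) χ)
  (hχone : ∀ y, ‖y‖ ≤ 1 → χ y = 1)
  (c : ℝ) (hc : 1 ≤ c)

include hχone hc in
lemma g_zero_ball (z : EuclideanSpace ℝ (Fin p)) (hz : ‖z‖ < 1/c) :
    (1 - χ (c • z) : ℂ) * F z = 0 := by
  have hc0 : (0:ℝ) < c := lt_of_lt_of_le one_pos hc
  have hcz : ‖c • z‖ ≤ 1 := by
    rw [norm_smul, Real.norm_eq_abs, abs_of_pos hc0]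
    calc c * ‖z‖ ≤ c * (1/c) := by nlinarith [norm_nonneg z]
    _ = 1 := by field_simp
  rw [hχone _ hcz]
  push_cast; ring

include hχone hc in
lemma g_ev_zero (y : EuclideanSpace ℝ (Fin p)) (hy : ‖y‖ < 1/c) :
    (fun _ : EuclideanSpace ℝ (Fin p) => (0:ℂ))
      =ᶠ[nhds y] (fun z => (1 - χ (c • z) : ℂ) * F z) := by
  have hc0 : (0:ℝ) < c := lt_of_lt_of_le one_pos hc
  have : y ∈ Metric.ball (0 : EuclideanSpace ℝ (Fin p)) (1/c) := by
    rwa [mem_ball_zero_iff]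
  filter_upwards [Metric.isOpen_ball.mem_nhds this] with z hz
  rw [mem_ball_zero_iff] at hz
  exact (g_zero_ball F χ hχone c hc z hz).symm

include hχone hc in
lemma pdE_g_zero (k : Fin p) (y : EuclideanSpace ℝ (Fin p)) (hy : ‖y‖ < 1/c) :
    pdE k (fun z => (1 - χ (c • z) : ℂ) * F z) y = 0 := by
  rw [pdE, ← (g_ev_zero F χ hχone c hc y hy).fderiv_eq]; simp

include hχone hc in
lemma pdE2_g_zero (j k : Fin p) (y : EuclideanSpace ℝ (Fin p)) (hy : ‖y‖ < 1/c) :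
    pdE j (pdE k (fun z => (1 - χ (c • z) : ℂ) * F z)) y = 0 := by
  have hc0 : (0:ℝ) < c := lt_of_lt_of_le one_pos hc
  have hmem : y ∈ Metric.ball (0 : EuclideanSpace ℝ (Fin p)) (1/c) := by
    rwa [mem_ball_zero_iff]
  have hev : (fun _ : EuclideanSpace ℝ (Fin p) => (0:ℂ))
      =ᶠ[nhds y] pdE k (fun z => (1 - χ (c • z) : ℂ) * F z) := by
    filter_upwards [Metric.isOpen_ball.mem_nhds hmem] with z hz
    rw [mem_ball_zero_iff] at hz
    exact (pdE_g_zero F χ hχone c hc k z hz).symm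
  rw [pdE, ← hev.fderiv_eq]; simp

include hFsmooth hχsmooth hχone hc in
lemma g_smooth : ContDiff ℝ (⊤ : ℕ∞) (fun z => (1 - χ (c • z) : ℂ) * F z) := by
  have hc0 : (0:ℝ) < c := lt_of_lt_of_le one_pos hc
  rw [contDiff_iff_contDiffAt]
  intro y
  by_cases hy : ‖y‖ < 1/c
  · exact (contDiffAt_const (c := (0:ℂ))).congr_of_eventuallyEq
      (g_ev_zero F χ hχone c hc y hy).symm
  · have hy0 : y ≠ 0 := by
      intro h; apply hy; rw [h]; simpa using by positivity
    have h1 : ContDiffAt ℝ (⊤ : ℕ∞) (fun z : EuclideanSpace ℝ (Fin p) => (1 - χ (c • z) : ℂ)) y :=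
      (contDiff_const.sub (Complex.ofRealCLM.contDiff.comp
        (hχsmooth.comp (contDiff_smul_self' c)))).contDiffAt
    have h2 : ContDiffAt ℝ (⊤ : ℕ∞) F y := hFsmooth.contDiffAt (hopen.mem_nhds hy0)
    exact h1.mul h2
end

section
variable {p : ℕ}
variable (F : EuclideanSpace ℝ (Fin p) → ℂ)
  (hFsmooth : ContDiffOn ℝ (⊤ : ℕ∞) F {y | y ≠ 0})
  (hFhom : ∀ l : ℝ, 0 ≤ l → ∀ y, F (l • y) = (l : ℂ)^2 * F y)
  (χ : EuclideanSpace ℝ (Fin p) → ℝ)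
  (hχsmooth : ContDiff ℝ (⊤ : ℕ∞) χ)
  (hχ01 : ∀ y, 0 ≤ χ y ∧ χ y ≤ 1)
  (hχone : ∀ y, ‖y‖ ≤ 1 → χ y = 1)
  (hχzero : ∀ y, 3 ≤ ‖y‖ → χ y = 0)
  (hχd : ∀ j y, |pdER j χ y| ≤ 1)
  (hχdd : ∀ j k y, |pdER j (pdER k χ) y| ≤ 1)
  (CF : ℝ)
  (hCF1 : ∀ z, ‖z‖ ≤ 3 → ‖F z‖ ≤ CF)
  (hCF2 : ∀ j z, ‖z‖ ≤ 3 → ‖pdE j F z‖ ≤ CF)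
  (hCF3 : ∀ j k z, ‖z‖ = 1 → ‖pdE j (pdE k F) z‖ ≤ CF)
  (c : ℝ) (hc : 1 ≤ c)

include hCF1 in
lemma hCF0 : 0 ≤ CF := le_trans (norm_nonneg _) (hCF1 0 (by simp))

include hχ01 in
lemma abs_one_sub_chi (v : EuclideanSpace ℝ (Fin p)) :
    ‖1 - (χ v : ℂ)‖ ≤ 1 := by
  have h1 : ((1:ℂ) - (χ v : ℂ)) = ((1 - χ v : ℝ) : ℂ) := by push_cast; ring
  rw [h1, Complex.norm_real, Real.norm_eq_abs]
  exact abs_le.mpr ⟨by linarith [(hχ01 v).2], by linarith [(hχ01 v).1]⟩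

include hFhom hχ01 hCF1 in
lemma bound1 (y : EuclideanSpace ℝ (Fin p)) :
    ‖(1 - χ (c • y) : ℂ) * F y‖ ≤ CF * ‖y‖^2 := by
  rw [norm_mul]
  calc ‖1 - (χ (c • y) : ℂ)‖ * ‖F y‖
      ≤ 1 * (CF * ‖y‖^2) :=
        mul_le_mul (abs_one_sub_chi χ hχ01 _) (bound_F F hFhom CF hCF1 y)
          (norm_nonneg _) one_pos.le
    _ = CF * ‖y‖^2 := one_mul _

include hFsmooth hFhom hχsmooth hχ01 hχone hχzero hχd hCF1 hCF2 hc in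
lemma bound2 (k : Fin p) (y : EuclideanSpace ℝ (Fin p)) :
    ‖pdE k (fun z => (1 - χ (c • z) : ℂ) * F z) y‖ ≤ 4 * CF * ‖y‖ := by
  have hc0 : (0:ℝ) < c := lt_of_lt_of_le one_pos hc
  have hCF0' : 0 ≤ CF := hCF0 F CF hCF1
  by_cases hylt : ‖y‖ < 1/c
  · rw [pdE_g_zero F χ hχone c hc k y hylt]
    simp only [norm_zero]
    positivity
  · push_neg at hylt
    have hy0 : y ≠ 0 := by
      intro h; rw [h] at hylt; simp at hylt; nlinarith
    have hncy : ‖c • y‖ = c * ‖y‖ := by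
      rw [norm_smul, Real.norm_eq_abs, abs_of_pos hc0]
    rw [D1_formula F hFsmooth χ hχsmooth hχ01 hχone c hc k y]
    refine le_trans (norm_add_le _ _) ?_
    have hA : ‖-((c:ℂ) * (pdER k χ (c • y) : ℂ)) * F y‖ ≤ 3 * CF * ‖y‖ := by
      rw [norm_mul, norm_neg, norm_mul, Complex.norm_real, Real.norm_eq_abs, Complex.norm_real, Real.norm_eq_abs,
        abs_of_pos hc0]
      by_cases h3 : c * ‖y‖ ≤ 3
      · have hd1 : |pdER k χ (c • y)| ≤ 1 := hχd k _
        have hF1 : ‖F y‖ ≤ CF * ‖y‖^2 := bound_F F hFhom CF hCF1 y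
        have h0 : (0:ℝ) ≤ ‖F y‖ := norm_nonneg _
        have e1 : c * |pdER k χ (c • y)| * ‖F y‖ ≤ c * ‖F y‖ := by
          nlinarith [mul_le_mul_of_nonneg_right (mul_le_mul_of_nonneg_left hd1 hc0.le) h0]
        have e2 : c * ‖F y‖ ≤ c * (CF * ‖y‖^2) := by nlinarith
        have e3 : c * (CF * ‖y‖^2) ≤ 3 * CF * ‖y‖ := by
          nlinarith [mul_le_mul_of_nonneg_right h3 (mul_nonneg hCF0' (norm_nonneg y))]
        linarith
      · push_neg at h3
        have : pdER k χ (c • y) = 0 := by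
          rw [pdER, chi_fderiv_outer χ hχ01 hχzero _ (by rw [hncy]; linarith)]; simp
        rw [this]
        simp only [abs_zero, mul_zero, zero_mul]
        positivity
    have hB : ‖(1 - (χ (c • y) : ℂ)) * pdE k F y‖ ≤ CF * ‖y‖ := by
      rw [norm_mul]
      calc ‖1 - (χ (c • y) : ℂ)‖ * ‖pdE k F y‖
          ≤ 1 * (CF * ‖y‖) :=
            mul_le_mul (abs_one_sub_chi χ hχ01 _)
              (bound_pdE F hFsmooth hFhom CF hCF2 k y hy0)
              (norm_nonneg _) one_pos.le
        _ = CF * ‖y‖ := one_mul _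
    linarith

include hFsmooth hFhom hχsmooth hχ01 hχone hχzero hχd hχdd hCF1 hCF2 hCF3 hc in
lemma bound3 (j k : Fin p) (y : EuclideanSpace ℝ (Fin p)) :
    ‖pdE j (pdE k (fun z => (1 - χ (c • z) : ℂ) * F z)) y‖ ≤ 4 * CF := by
  have hc0 : (0:ℝ) < c := lt_of_lt_of_le one_pos hc
  have hCF0' : 0 ≤ CF := hCF0 F CF hCF1
  by_cases hylt : ‖y‖ < 1/c
  · rw [pdE2_g_zero F χ hχone c hc j k y hylt]
    simp only [norm_zero]
    positivity
  · push_neg at hylt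
    have hy0 : y ≠ 0 := by
      intro h; rw [h] at hylt; simp at hylt; nlinarith
    have hncy : ‖c • y‖ = c * ‖y‖ := by
      rw [norm_smul, Real.norm_eq_abs, abs_of_pos hc0]
    rw [D2_formula F hFsmooth χ hχsmooth hχ01 hχone c hc j k y hy0]
    rw [sub_eq_add_neg, sub_eq_add_neg]
    refine le_trans (norm_add_le _ _) ?_
    refine le_trans (add_le_add_left (norm_add_le _ _) _) ?_
    refine le_trans (add_le_add_left (add_le_add_left (norm_add_le _ _) _) _) ?_
    rw [norm_neg, norm_neg]
    have hT1 : ‖-((c:ℂ)^2 * (pdER j (pdER k χ) (c • y) : ℂ)) * F y‖ ≤ CF := by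
      rw [norm_mul, norm_neg, norm_mul, Complex.norm_real, Real.norm_eq_abs, norm_pow, Complex.norm_real, Real.norm_eq_abs,
        abs_of_pos hc0]
      by_cases h3 : c * ‖y‖ ≤ 3
      · have hd2 : |pdER j (pdER k χ) (c • y)| ≤ 1 := hχdd j k _
        have hF2 : c^2 * ‖F y‖ ≤ CF :=
          bound_F_scaled F hFhom CF hCF1 c hc0.le y h3
        nlinarith [abs_nonneg (pdER j (pdER k χ) (c • y)), norm_nonneg (F y)]
      · push_neg at h3
        have : pdER j (pdER k χ) (c • y) = 0 := by
          rw [pdER, chi_fderiv2_outer χ hχ01 hχzero k _ (by rw [hncy]; linarith)]; simp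
        rw [this]; simp; positivity
    have hT2 : ‖((c:ℂ) * (pdER k χ (c • y) : ℂ)) * pdE j F y‖ ≤ CF := by
      rw [norm_mul, norm_mul, Complex.norm_real, Real.norm_eq_abs, Complex.norm_real, Real.norm_eq_abs, abs_of_pos hc0]
      by_cases h3 : c * ‖y‖ ≤ 3
      · have hd1 : |pdER k χ (c • y)| ≤ 1 := hχd k _
        have hF1 : c * ‖pdE j F y‖ ≤ CF :=
          bound_pdE_scaled F hFsmooth hFhom CF hCF2 j c hc0 y hy0 h3
        nlinarith [abs_nonneg (pdER k χ (c • y)), norm_nonneg (pdE j F y)]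
      · push_neg at h3
        have : pdER k χ (c • y) = 0 := by
          rw [pdER, chi_fderiv_outer χ hχ01 hχzero _ (by rw [hncy]; linarith)]; simp
        rw [this]; simp; positivity
    have hT3 : ‖((c:ℂ) * (pdER j χ (c • y) : ℂ)) * pdE k F y‖ ≤ CF := by
      rw [norm_mul, norm_mul, Complex.norm_real, Real.norm_eq_abs, Complex.norm_real, Real.norm_eq_abs, abs_of_pos hc0]
      by_cases h3 : c * ‖y‖ ≤ 3
      · have hd1 : |pdER j χ (c • y)| ≤ 1 := hχd j _
        have hF1 : c * ‖pdE k F y‖ ≤ CF :=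
          bound_pdE_scaled F hFsmooth hFhom CF hCF2 k c hc0 y hy0 h3
        nlinarith [abs_nonneg (pdER j χ (c • y)), norm_nonneg (pdE k F y)]
      · push_neg at h3
        have : pdER j χ (c • y) = 0 := by
          rw [pdER, chi_fderiv_outer χ hχ01 hχzero _ (by rw [hncy]; linarith)]; simp
        rw [this]; simp; positivity
    have hT4 : ‖(1 - (χ (c • y) : ℂ)) * pdE j (pdE k F) y‖ ≤ CF := by
      rw [norm_mul]
      calc ‖1 - (χ (c • y) : ℂ)‖ * ‖pdE j (pdE k F) y‖
          ≤ 1 * CF :=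
            mul_le_mul (abs_one_sub_chi χ hχ01 _)
              (bound_pdE2 F hFsmooth hFhom CF hCF3 j k y hy0)
              (norm_nonneg _) one_pos.le
        _ = CF := one_mul _
    linarith
end


/-- regularization bounds in the proof of Lemma 4.4: the truncations
`F_ℓ(y) = (1 - χ(ℓy)) F(y)` of a function homogeneous of degree `2`, smooth away from the
origin, are smooth and satisfy `|F_ℓ| ≤ C_F |y|²`, `|∂_j F_ℓ| ≤ 4C_F |y|`,
`|∂_j∂_k F_ℓ| ≤ 4C_F`, uniformly in `ℓ`. -/
theorem truncation_bounds_homogeneous_degree_two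
    (p : ℕ) (hp : 1 ≤ p)
    (F : EuclideanSpace ℝ (Fin p) → ℂ)
    (hFsmooth : ContDiffOn ℝ (⊤ : ℕ∞) F {y | y ≠ 0})
    (hFhom : ∀ l : ℝ, 0 ≤ l → ∀ y, F (l • y) = (l : ℂ)^2 * F y)
    (χ : EuclideanSpace ℝ (Fin p) → ℝ)
    (hχsmooth : ContDiff ℝ (⊤ : ℕ∞) χ) (hχsupp : HasCompactSupport χ)
    (hχ01 : ∀ y, 0 ≤ χ y ∧ χ y ≤ 1)
    (hχone : ∀ y, ‖y‖ ≤ 1 → χ y = 1)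
    (hχzero : ∀ y, 3 ≤ ‖y‖ → χ y = 0)
    (hχd : ∀ j y, |pdER j χ y| ≤ 1)
    (hχdd : ∀ j k y, |pdER j (pdER k χ) y| ≤ 1)
    -- `C_F` bounds `F` and `∇F` on the ball of radius 3, and `∇²F` on the unit sphere
    (CF : ℝ)
    (hCF1 : ∀ z, ‖z‖ ≤ 3 → ‖F z‖ ≤ CF)
    (hCF2 : ∀ j z, ‖z‖ ≤ 3 → ‖pdE j F z‖ ≤ CF)
    (hCF3 : ∀ j k z, ‖z‖ = 1 → ‖pdE j (pdE k F) z‖ ≤ CF)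
    (l : ℕ) (hl : 1 ≤ l) :
    ContDiff ℝ (⊤ : ℕ∞) (fun y => (1 - χ ((l : ℝ) • y) : ℂ) * F y) ∧
    ∀ y : EuclideanSpace ℝ (Fin p),
      ‖(1 - χ ((l : ℝ) • y) : ℂ) * F y‖ ≤ CF * ‖y‖^2 ∧
      (∀ j, ‖pdE j (fun z => (1 - χ ((l : ℝ) • z) : ℂ) * F z) y‖
          ≤ 4 * CF * ‖y‖) ∧
      (∀ j k, ‖pdE j (pdE k (fun z => (1 - χ ((l : ℝ) • z) : ℂ) * F z)) y‖
          ≤ 4 * CF) := by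
  have hc : (1:ℝ) ≤ (l:ℝ) := by exact_mod_cast hl
  refine ⟨g_smooth F hFsmooth χ hχsmooth hχone (l:ℝ) hc, fun y => ⟨?_, ?_, ?_⟩⟩
  · exact bound1 F hFhom χ hχ01 CF hCF1 (l:ℝ) y
  · intro j
    exact bound2 F hFsmooth hFhom χ hχsmooth hχ01 hχone hχzero hχd CF hCF1 hCF2 (l:ℝ) hc j y
  · intro j k
    exact bound3 F hFsmooth hFhom χ hχsmooth hχ01 hχone hχzero hχd hχdd CF hCF1 hCF2 hCF3
      (l:ℝ) hc j k y
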